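/- For a positive integer d, the inequality φ(d)·(φ(d)+2) < 8d (φ Euler's totient), which for even φ(d) is equivalent to Σ_{j=1}^{φ(d)/2} j/d < 1, holds if and only if d belongs to the set {1,2,3,4,5,6,7,8,9,10,12,14,15,16,18,20,22,24,26,28,30,36,40,42,48,54,60,66,84,90}. -/

import Mathlib

/-!
Call `d` *totient-large* if `8 d ≤ φ(d) (φ(d) + 2)`. Writing `d = p m` with `p` the largest prime
factor of `d`, we have `φ(d) = p φ(m)` or `(p - 1) φ(m)`, and in both cases totient-largeness passes
from `m` to `d`, except for `p = 2 ∤ m`, which forces `m = 1`. So by induction every `d` that is not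
totient-large arises as `p m` with `m` in the listed set, and a finite search over `p` closes the set:
for `p ≥ 722` already `(p - 1)(p + 1) ≥ 720 p ≥ 8 p m` since `m ≤ 90`.
-/

open Finset

def smallTotientSet : Finset ℕ :=
  {1, 2, 3, 4, 5, 6, 7, 8, 9, 10, 12, 14, 15, 16, 18, 20, 22, 24, 26, 28,
    30, 36, 40, 42, 48, 54, 60, 66, 84, 90}

def TotientLarge (d : ℕ) : Prop :=
  8 * d ≤ d.totient * (d.totient + 2)

lemma sum_Icc_one_id_mul_two (k : ℕ) : (∑ i ∈ Icc 1 k, i) * 2 = k * (k + 1) := by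
  induction k with
  | zero => simp
  | succ k ih => rw [sum_Icc_succ_top (by omega), add_mul, ih]; ring

lemma sum_Icc_one_div_lt_one_iff {d : ℕ} (hd : 0 < d) (k : ℕ) :
    ∑ j ∈ Icc 1 k, (j : ℚ) / d < 1 ↔ k * (k + 1) < 2 * d := by
  rw [← sum_div, div_lt_one (by exact_mod_cast hd), ← Nat.cast_sum, Nat.cast_lt]
  have := sum_Icc_one_id_mul_two k
  omega

lemma mul_mul_add_two_le_mul_mul_mul_add_two (p t : ℕ) :
    p * (t * (t + 2)) ≤ p * t * (p * t + 2) := by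
  have : p * (t * t) ≤ p * t * (p * t) := by
    nlinarith [Nat.mul_le_mul_right (t * t) (Nat.le_mul_self p)]
  nlinarith

lemma mul_mul_add_two_le_pred_mul_mul_add_two {p t : ℕ} (hp : 3 ≤ p) (ht : 2 ≤ t) :
    p * (t * (t + 2)) ≤ (p - 1) * t * ((p - 1) * t + 2) := by
  obtain ⟨q, rfl⟩ : ∃ q, p = q + 1 := ⟨p - 1, by omega⟩
  simp only [Nat.add_sub_cancel]
  -- `(q + 1)(t² + 2t) ≤ q² t² + 2 q t` reduces to `(q + 2) t² ≤ q² t²` and `2 t ≤ t²`.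
  have hq : (q + 2) * (t * t) ≤ q * q * (t * t) := Nat.mul_le_mul_right _ (by nlinarith)
  have ht' : 2 * t ≤ t * t := Nat.mul_le_mul_right t ht
  nlinarith

lemma TotientLarge.mul_le {p m : ℕ} (hm : TotientLarge m) :
    8 * (p * m) ≤ p * (m.totient * (m.totient + 2)) := by
  rw [mul_left_comm]
  exact Nat.mul_le_mul_left p hm

lemma TotientLarge.prime_mul_of_dvd {p m : ℕ} (hp : p.Prime) (hpm : p ∣ m)
    (hm : TotientLarge m) : TotientLarge (p * m) := by
  unfold TotientLarge
  rw [Nat.totient_mul_of_prime_of_dvd hp hpm]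
  exact hm.mul_le.trans (mul_mul_add_two_le_mul_mul_mul_add_two p _)

lemma TotientLarge.prime_mul_of_not_dvd {p m : ℕ} (hp : p.Prime) (hp2 : p ≠ 2) (hpm : ¬p ∣ m)
    (hm : TotientLarge m) : TotientLarge (p * m) := by
  unfold TotientLarge
  rw [Nat.totient_mul_of_prime_of_not_dvd hp hpm]
  have hp3 : 3 ≤ p := by have := hp.two_le; omega
  have hm0 : 0 < m := Nat.pos_of_ne_zero fun h => hpm (h ▸ dvd_zero p)
  have ht : 2 ≤ m.totient := by unfold TotientLarge at hm; nlinarith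
  exact hm.mul_le.trans (mul_mul_add_two_le_pred_mul_mul_add_two hp3 ht)

set_option maxRecDepth 10000 in
lemma mul_le_or_mem_smallTotientSet_of_dvd :
    ∀ m ∈ smallTotientSet, ∀ p < 91, 2 ≤ p → p ∣ m →
      8 * (p * m) ≤ p * m.totient * (p * m.totient + 2) ∨ p * m ∈ smallTotientSet := by
  decide

set_option maxRecDepth 10000 in
lemma mul_le_or_mem_smallTotientSet_of_coprime :
    ∀ m ∈ smallTotientSet, ∀ p < 722, 2 ≤ p → p.Coprime m →
      8 * (p * m) ≤ (p - 1) * m.totient * ((p - 1) * m.totient + 2) ∨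
        p * m ∈ smallTotientSet := by
  decide

lemma prime_mul_totientLarge_or_mem_smallTotientSet {p m : ℕ} (hp : p.Prime)
    (hm : m ∈ smallTotientSet) : TotientLarge (p * m) ∨ p * m ∈ smallTotientSet := by
  have hm90 : 0 < m ∧ m ≤ 90 := by revert m; decide
  unfold TotientLarge
  by_cases hpm : p ∣ m
  · rw [Nat.totient_mul_of_prime_of_dvd hp hpm]
    exact mul_le_or_mem_smallTotientSet_of_dvd m hm p
      (by have := Nat.le_of_dvd hm90.1 hpm; omega) hp.two_le hpm
  rw [Nat.totient_mul_of_prime_of_not_dvd hp hpm]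
  rcases lt_or_ge p 722 with hlt | hge
  · exact mul_le_or_mem_smallTotientSet_of_coprime m hm p hlt hp.two_le
      (hp.coprime_iff_not_dvd.mpr hpm)
  left
  have ht : 1 ≤ m.totient := Nat.totient_pos.mpr hm90.1
  calc 8 * (p * m) ≤ (p - 1) * (p - 1 + 2) := by
        obtain ⟨q, rfl⟩ : ∃ q, p = q + 1 := ⟨p - 1, by omega⟩
        simp only [Nat.add_sub_cancel]
        nlinarith
    _ ≤ (p - 1) * m.totient * ((p - 1) * m.totient + 2) :=
        Nat.mul_le_mul (Nat.le_mul_of_pos_right _ ht)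
          (Nat.add_le_add_right (Nat.le_mul_of_pos_right _ ht) 2)

lemma exists_prime_mul_of_forall_prime_dvd_le {d : ℕ} (hd : 1 < d) :
    ∃ p m, p.Prime ∧ d = p * m ∧ ∀ q, q.Prime → q ∣ m → q ≤ p := by
  have hne : d.primeFactors.Nonempty := Nat.nonempty_primeFactors.mpr hd
  obtain ⟨hp, hpd, hd0⟩ := Nat.mem_primeFactors.mp (d.primeFactors.max'_mem hne)
  refine ⟨_, d / d.primeFactors.max' hne, hp, (Nat.mul_div_cancel' hpd).symm, fun q hq hqm => ?_⟩
  exact d.primeFactors.le_max' q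
    (Nat.mem_primeFactors.mpr ⟨hq, hqm.trans (Nat.div_dvd_of_dvd hpd), hd0⟩)

lemma TotientLarge.prime_mul_of_forall_prime_dvd_le {p m : ℕ} (hp : p.Prime)
    (hmax : ∀ q, q.Prime → q ∣ m → q ≤ p) (hm : TotientLarge m) : TotientLarge (p * m) := by
  by_cases hpm : p ∣ m
  · exact hm.prime_mul_of_dvd hp hpm
  refine hm.prime_mul_of_not_dvd hp (fun hp2 => ?_) hpm
  -- every prime factor of `m` is at most `p = 2` yet `p ∤ m`, so `m = 1`
  have hm1 : m = 1 := Nat.eq_one_iff_not_exists_prime_dvd.mpr fun q hq hqm => by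
    have := hmax q hq hqm
    have := hq.two_le
    exact hpm (show q = p by omega ▸ hqm)
  exact absurd (hm1 ▸ hm) (by unfold TotientLarge; decide)

lemma totientLarge_or_mem_smallTotientSet {d : ℕ} (hd : 0 < d) :
    TotientLarge d ∨ d ∈ smallTotientSet := by
  induction d using Nat.strong_induction_on with
  | _ d ih =>
  rcases (Nat.succ_le_of_lt hd).eq_or_lt with rfl | hd1
  · exact Or.inr (by decide)
  obtain ⟨p, m, hp, rfl, hmax⟩ := exists_prime_mul_of_forall_prime_dvd_le hd1
  have hm : 0 < m := Nat.pos_of_mul_pos_left hd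
  obtain hmL | hmS := ih m (by nlinarith [hp.two_le]) hm
  · exact Or.inl (hmL.prime_mul_of_forall_prime_dvd_le hp hmax)
  · exact prime_mul_totientLarge_or_mem_smallTotientSet hp hmS

lemma totient_mul_totient_add_two_lt_iff {d : ℕ} (hd : 0 < d) :
    d.totient * (d.totient + 2) < 8 * d ↔ d ∈ smallTotientSet := by
  refine ⟨fun h => ?_, fun h => ?_⟩
  · exact (totientLarge_or_mem_smallTotientSet hd).resolve_left (not_le.mpr h)
  · exact (by decide : ∀ d ∈ smallTotientSet, d.totient * (d.totient + 2) < 8 * d) d h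

theorem stmt12 (d : ℕ) (hd : 0 < d) :
    (Even (Nat.totient d) →
      ((∑ j ∈ Finset.Icc 1 (Nat.totient d / 2), (j : ℚ) / d) < 1 ↔
        Nat.totient d * (Nat.totient d + 2) < 8 * d)) ∧
    (Nat.totient d * (Nat.totient d + 2) < 8 * d ↔
      d ∈ ({1, 2, 3, 4, 5, 6, 7, 8, 9, 10, 12, 14, 15, 16, 18, 20, 22, 24, 26, 28,
            30, 36, 40, 42, 48, 54, 60, 66, 84, 90} : Finset ℕ)) := by
  refine ⟨fun ⟨k, hk⟩ => ?_, totient_mul_totient_add_two_lt_iff hd⟩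
  rw [sum_Icc_one_div_lt_one_iff hd, hk, show (k + k) / 2 = k by omega]
  have h4 : (k + k) * (k + k + 2) = 4 * (k * (k + 1)) := by ring
  omega
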